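/- arXiv:2106.11519 — 4 statements merged into one kernel-verified Lean document; each statement's English description precedes it below -/
import Mathlib

section
/- Let d ≥ 1 and λ ∈ ℂ^d. For every integer m ≥ 1 and every 1 ≤ k ≤ d, the identity ( Σ_{j=1}^{d} α_{m,j}(λ) ) · e_k(λ) = Σ_{j=k}^{d} (j choose k) · α_{m+k,j}(λ) holds. -/
open Finset

/-- The `k`-th elementary symmetric polynomial of `lam 1, …, lam d`. -/
noncomputable def esymm (d : ℕ) (lam : Fin d → ℂ) (k : ℕ) : ℂ :=
  ∑ S ∈ Finset.powersetCard k (Finset.univ : Finset (Fin d)), ∏ j ∈ S, lam j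

/-- `α_{m,k}(λ)`: the sum over all `y ∈ {0,…,m}^d` with exactly `k` strictly positive
coordinates and total sum `m` of `∏ j, λ_j ^ y_j`. -/
noncomputable def alpha (d : ℕ) (lam : Fin d → ℂ) (m k : ℕ) : ℂ :=
  ∑ y ∈ (Fintype.piFinset fun _ : Fin d => Finset.range (m + 1)).filter
      (fun y => (Finset.univ.filter fun j => 0 < y j).card = k ∧ ∑ j, y j = m),
    ∏ j, lam j ^ y j

/-! For `m ≥ 1` the left factor `∑ j, α_{m,j}` is the sum of `λ^y` over all `y ∈ ℕ^d` with
`|y| = m`, and `e_k` is the sum of `λ^{1_S}` over the `k`-subsets `S`. The map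
`(y, S) ↦ (y + 1_S, S)` is a bijection onto the pairs `(z, S)` with `|z| = m + k` and
`S ⊆ supp z`; a fixed `z` occurs in `(#supp z).choose k` of them, and grouping the `z` by
`#supp z` gives the right-hand side. -/

section Tuples

variable {ι : Type*} [Fintype ι]

lemma sum_indicator_one (S : Finset ι) : ∑ i, (S : Set ι).indicator (1 : ι → ℕ) i = #S := by
  classical
  simp [Set.indicator_apply]

lemma indicator_one_le_of_subset {S : Finset ι} {z : ι → ℕ}
    (hS : S ⊆ ({i | 0 < z i} : Finset _)) : (S : Set ι).indicator 1 ≤ z := fun i => by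
  by_cases hi : i ∈ S
  · simpa [hi, Nat.one_le_iff_ne_zero, Nat.pos_iff_ne_zero] using hS hi
  · simp [hi]

lemma prod_pow_add_indicator_one {M : Type*} [CommMonoid M] (x : ι → M) (y : ι → ℕ)
    (S : Finset ι) :
    ∏ i, x i ^ (y + (S : Set ι).indicator (1 : ι → ℕ)) i = (∏ i, x i ^ y i) * ∏ i ∈ S, x i := by
  classical
  simp only [Pi.add_apply, pow_add, prod_mul_distrib, Set.indicator_apply, mem_coe, Pi.one_apply,
    pow_ite, pow_one, pow_zero, prod_ite_mem, univ_inter]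

end Tuples

lemma sum_antidiagonalTuple_add_indicator {M : Type*} [AddCommMonoid M] {d : ℕ}
    (g : (Fin d → ℕ) → M) (m : ℕ) (S : Finset (Fin d)) :
    ∑ y ∈ Nat.antidiagonalTuple d m, g (y + (S : Set (Fin d)).indicator 1) =
      ∑ z ∈ Nat.antidiagonalTuple d (m + #S) with S ⊆ ({i | 0 < z i} : Finset _), g z := by
  refine sum_nbij' (· + (S : Set (Fin d)).indicator 1) (· - (S : Set (Fin d)).indicator 1)
    (fun y hy => ?_) (fun z hz => ?_) (fun y _ => add_tsub_cancel_right y _)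
    (fun z hz => tsub_add_cancel_of_le (indicator_one_le_of_subset (mem_filter.1 hz).2))
    fun _ _ => rfl
  · rw [Nat.mem_antidiagonalTuple] at hy
    refine mem_filter.2 ⟨?_, fun i hi => ?_⟩
    · rw [Nat.mem_antidiagonalTuple, ← sum_indicator_one, ← hy, ← sum_add_distrib]
      rfl
    · simp [hi]
  · rw [mem_filter, Nat.mem_antidiagonalTuple] at hz
    simp only [Nat.mem_antidiagonalTuple, Pi.sub_apply]
    rw [sum_tsub_distrib _ fun i _ => indicator_one_le_of_subset hz.2 i, hz.1, sum_indicator_one,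
      Nat.add_sub_cancel]

lemma alpha_eq_sum_antidiagonalTuple (d : ℕ) (lam : Fin d → ℂ) (M j : ℕ) :
    alpha d lam M j =
      ∑ y ∈ Nat.antidiagonalTuple d M with #{i | 0 < y i} = j, ∏ i, lam i ^ y i := by
  refine sum_congr (ext fun y => ?_) fun _ _ => rfl
  simp only [mem_filter, Fintype.mem_piFinset, mem_range, Nat.lt_succ_iff,
    Nat.mem_antidiagonalTuple]
  refine ⟨fun h => ⟨h.2.2, h.2.1⟩, fun h => ⟨fun i => ?_, h.2, h.1⟩⟩
  exact h.1 ▸ single_le_sum (fun j _ => Nat.zero_le (y j)) (mem_univ i)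

lemma card_filter_pos_mem_Icc {d M : ℕ} (hM : 0 < M) {y : Fin d → ℕ}
    (hy : y ∈ Nat.antidiagonalTuple d M) : #{i | 0 < y i} ∈ Icc 1 d := by
  rw [Nat.mem_antidiagonalTuple] at hy
  obtain ⟨i, -, hi⟩ := exists_ne_zero_of_sum_ne_zero (hy.trans_ne hM.ne')
  refine mem_Icc.2 ⟨card_pos.2 ⟨i, by simpa [Nat.pos_iff_ne_zero]⟩, ?_⟩
  exact (card_le_univ _).trans (Fintype.card_fin d).le

lemma sum_Icc_mul_alpha (d : ℕ) (lam : Fin d → ℂ) {M : ℕ} (hM : 0 < M) (f : ℕ → ℂ) :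
    ∑ j ∈ Icc 1 d, f j * alpha d lam M j =
      ∑ y ∈ Nat.antidiagonalTuple d M, f #{i | 0 < y i} * ∏ i, lam i ^ y i := by
  rw [← sum_fiberwise_of_maps_to fun y => card_filter_pos_mem_Icc hM]
  refine sum_congr rfl fun j _ => ?_
  rw [alpha_eq_sum_antidiagonalTuple, mul_sum]
  exact sum_congr rfl fun y hy => by rw [(mem_filter.1 hy).2]

lemma sum_powersetCard_sum_filter_subset {α ι M : Type*} [AddCommMonoid M] [Fintype ι]
    [DecidableEq ι] (k : ℕ) (t : Finset α) (s : α → Finset ι) (g : α → M) :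
    ∑ S ∈ powersetCard k univ, ∑ z ∈ t with S ⊆ s z, g z = ∑ z ∈ t, (#(s z)).choose k • g z := by
  rw [sum_comm' (t' := t) (s' := fun z => powersetCard k (s z))]
  · simp_rw [sum_const, card_powersetCard]
  · intro S z
    simp only [mem_powersetCard, mem_filter, subset_univ, true_and]
    tauto

theorem alpha_recursive_relation_general (d : ℕ) (lam : Fin d → ℂ)
    (m k : ℕ) (hm : 1 ≤ m) (hk1 : 1 ≤ k) :
    (∑ j ∈ Finset.Icc 1 d, alpha d lam m j) * esymm d lam k =
      ∑ j ∈ Finset.Icc k d, (j.choose k : ℂ) * alpha d lam (m + k) j := by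
  have hsum_alpha := sum_Icc_mul_alpha d lam hm fun _ => 1
  simp only [one_mul] at hsum_alpha
  calc (∑ j ∈ Icc 1 d, alpha d lam m j) * esymm d lam k
      = ∑ S ∈ powersetCard k univ, ∑ y ∈ Nat.antidiagonalTuple d m,
          ∏ i, lam i ^ (y + (S : Set (Fin d)).indicator (1 : Fin d → ℕ)) i := by
        simp_rw [hsum_alpha, esymm, sum_mul_sum, prod_pow_add_indicator_one]
        exact sum_comm
    _ = ∑ S ∈ powersetCard k univ, ∑ z ∈ Nat.antidiagonalTuple d (m + k)
          with S ⊆ ({i | 0 < z i} : Finset _), ∏ i, lam i ^ z i :=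
        sum_congr rfl fun S hS => (mem_powersetCard.1 hS).2 ▸
          sum_antidiagonalTuple_add_indicator (fun z => ∏ i, lam i ^ z i) m S
    _ = ∑ z ∈ Nat.antidiagonalTuple d (m + k),
          ((#{i | 0 < z i}).choose k : ℂ) * ∏ i, lam i ^ z i := by
        rw [sum_powersetCard_sum_filter_subset]
        simp only [nsmul_eq_mul]
    _ = ∑ j ∈ Icc 1 d, (j.choose k : ℂ) * alpha d lam (m + k) j :=
        (sum_Icc_mul_alpha d lam (by omega) fun j => (j.choose k : ℂ)).symm
    _ = ∑ j ∈ Icc k d, (j.choose k : ℂ) * alpha d lam (m + k) j := by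
        refine (sum_subset (Icc_subset_Icc_left hk1) fun j hj hjk => ?_).symm
        rw [Nat.choose_eq_zero_of_lt (by simp_all), Nat.cast_zero, zero_mul]

/-- Lemma B.3: combinatorial identity between the coefficients `α_{m,k}`. -/
theorem alpha_recursive_relation (d : ℕ) (hd : 1 ≤ d) (lam : Fin d → ℂ)
    (m k : ℕ) (hm : 1 ≤ m) (hk1 : 1 ≤ k) (hkd : k ≤ d) :
    (∑ j ∈ Finset.Icc 1 d, alpha d lam m j) * esymm d lam k =
      ∑ j ∈ Finset.Icc k d, (j.choose k : ℂ) * alpha d lam (m + k) j :=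
  alpha_recursive_relation_general d lam m k hm hk1
end

section
/- Let d ≥ 1, m ≥ 0 and 1 ≤ k ≤ min{d, m} be integers, and let λ ∈ ℂ^d satisfy |λ_j| ≤ 1 for every j ∈ {1,…,d}. Then |α_{m,k}(λ)| ≤ (4e·max{m, d}/d)^d. Moreover, for k = m ≤ d one has |α_k(λ)| = |α_{k,k}(λ)| ≤ 4^d. -/
/-!
Every term of `α_{m,k}(λ)` has modulus at most `1`, and its index `y` is a weak composition of
`m` into `d` parts, of which there are `C(d+m-1, m) ≤ C(d+m, d)`. The first bound is then
`C(n, r) ≤ (e n / r)^r` with `n = d + m ≤ 2 max{m, d}`; for `m ≤ d` the second is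
`C(d+m-1, m) ≤ 2^(d+m-1) ≤ 4^d`.
-/

open Finset

theorem ncard_setOf_sum_eq (d m : ℕ) :
    {y : Fin d → ℕ | ∑ j, y j = m}.ncard = (d + m - 1).choose m := by
  calc _ = Nat.card {y : Fin d → ℕ // ∑ j, y j = m} := (Nat.card_coe_set_eq _).symm
    _ = Nat.card (Sym (Fin d) m) := Nat.card_congr (Sym.equivNatSumOfFintype _ _).symm
    _ = (d + m - 1).choose m := by
      rw [Nat.card_eq_fintype_card, Sym.card_sym_eq_choose, Fintype.card_fin]

theorem finite_setOf_sum_eq (d m : ℕ) : {y : Fin d → ℕ | ∑ j, y j = m}.Finite :=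
  Set.finite_coe_iff.1 (Finite.of_equiv _ (Sym.equivNatSumOfFintype (Fin d) m))

theorem Nat.choose_le_exp_mul_div_pow (n r : ℕ) :
    (n.choose r : ℝ) ≤ (Real.exp 1 * n / r) ^ r := by
  rcases r.eq_zero_or_pos with rfl | hr
  · simp
  have hr' : (0 : ℝ) < r := by exact_mod_cast hr
  have h := Real.pow_div_factorial_le_exp _ hr'.le r
  rw [← Real.exp_one_pow] at h
  calc (n.choose r : ℝ) ≤ n ^ r / r.factorial := Nat.choose_le_pow_div r n
    _ = (n / r) ^ r * (r ^ r / r.factorial) := by rw [div_pow]; field_simp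
    _ ≤ (n / r) ^ r * Real.exp 1 ^ r := by gcongr
    _ = (Real.exp 1 * n / r) ^ r := by ring

theorem norm_alpha_le_choose (d m k : ℕ) (lam : Fin d → ℂ) (hlam : ∀ j, ‖lam j‖ ≤ 1) :
    ‖alpha d lam m k‖ ≤ (d + m - 1).choose m := by
  set S := (Fintype.piFinset fun _ : Fin d => range (m + 1)).filter
      (fun y => #(univ.filter fun j => 0 < y j) = k ∧ ∑ j, y j = m)
  have hterm (y : Fin d → ℕ) : ‖∏ j, lam j ^ y j‖ ≤ 1 := by
    rw [norm_prod]
    exact prod_le_one (fun _ _ => by positivity) fun j _ => by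
      rw [norm_pow]; exact pow_le_one₀ (norm_nonneg _) (hlam j)
  have hcard : #S ≤ (d + m - 1).choose m := by
    rw [← ncard_setOf_sum_eq, ← Set.ncard_coe_finset]
    exact Set.ncard_le_ncard (fun y hy => (mem_filter.1 hy).2.2) (finite_setOf_sum_eq d m)
  calc ‖alpha d lam m k‖ ≤ ∑ _y ∈ S, (1 : ℝ) := norm_sum_le_of_le S fun y _ => hterm y
    _ ≤ (d + m - 1).choose m := by rw [sum_const, nsmul_one]; exact_mod_cast hcard

theorem alpha_independent_bound_general (d m k : ℕ)
    (hk : k ≤ min d m) (lam : Fin d → ℂ) (hlam : ∀ j, ‖lam j‖ ≤ 1) :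
    ‖alpha d lam m k‖ ≤ (4 * Real.exp 1 * (max m d : ℝ) / (d : ℝ)) ^ d ∧
      (k = m → ‖alpha d lam m k‖ ≤ 4 ^ d) := by
  have hnorm := norm_alpha_le_choose d m k lam hlam
  constructor
  · have hchoose : (d + m - 1).choose m ≤ (d + m).choose d :=
      Nat.choose_symm_add (a := d) ▸ Nat.choose_le_choose m (Nat.sub_le _ _)
    have hbase : Real.exp 1 * ↑(d + m) ≤ 4 * Real.exp 1 * max (m : ℝ) d := by
      push_cast
      nlinarith [le_max_left (m : ℝ) d, le_max_right (m : ℝ) d, Real.exp_pos 1]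
    calc ‖alpha d lam m k‖ ≤ (d + m).choose d := hnorm.trans (by exact_mod_cast hchoose)
      _ ≤ (Real.exp 1 * ↑(d + m) / d) ^ d := Nat.choose_le_exp_mul_div_pow _ _
      _ ≤ (4 * Real.exp 1 * max (m : ℝ) d / d) ^ d := by gcongr
  · rintro rfl
    have hmd : k ≤ d := (le_min_iff.1 hk).1
    have hchoose : (d + k - 1).choose k ≤ 4 ^ d :=
      (Nat.choose_le_two_pow _ _).trans <| by
        rw [show 4 = 2 ^ 2 by rfl, ← pow_mul]; exact Nat.pow_le_pow_right two_pos (by omega)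
    exact hnorm.trans (by exact_mod_cast hchoose)

/-- Lemma B.4: bound on the coefficients `α_{m,k}(λ)` when all `|λ_j| ≤ 1`. -/
theorem alpha_independent_bound (d m k : ℕ) (hd : 1 ≤ d) (hk1 : 1 ≤ k)
    (hk : k ≤ min d m) (lam : Fin d → ℂ) (hlam : ∀ j, ‖lam j‖ ≤ 1) :
    ‖alpha d lam m k‖ ≤ (4 * Real.exp 1 * (max m d : ℝ) / (d : ℝ)) ^ d ∧
      (k = m → ‖alpha d lam m k‖ ≤ 4 ^ d) :=
  alpha_independent_bound_general d m k hk lam hlam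
end

section
/- Let d ≥ 1, m ≥ 0 and 1 ≤ k ≤ d be integers, and let λ ∈ ℂ^d satisfy |λ_j| ≤ 1 for every j ∈ {1,…,d}. Then |β_{m,k}(λ)| ≤ (8e·max{m+k, d}/d)^d. -/
open Finset

/-- `β_{m,k}(λ)`, defined by `β_{0,k} = e_k(λ)` and
`β_{m,k} = β_{m−1,1}·e_k(λ) − β_{m−1,k+1}` (the convention `β_{m−1,d+1} = 0` is
automatic since `esymm d lam k = 0` for `k > d`, so `β_{m,k} = 0` for `k > d`). -/
noncomputable def betaC (d : ℕ) (lam : Fin d → ℂ) : ℕ → ℕ → ℂ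
  | 0, k => esymm d lam k
  | m + 1, k => betaC d lam m 1 * esymm d lam k - betaC d lam m (k + 1)

/-!
Let `h_n` be the complete homogeneous symmetric polynomials of `λ`, with generating function
`∏ j, 1 / (1 - λ_j X)`. Multiplying it by `∏ j, (1 - λ_j X) = ∑ (-1)^i e_i X^i` gives `1`, so
`∑_{i+j=n} (-1)^i e_i h_j = 0` for `n ≥ 1`, and this solves the recursion defining `β`:
`β_{m,k} = ∑_{i+j=m} (-1)^i e_{k+i} h_j`. When `|λ_j| ≤ 1`, `|e_i| ≤ C(d,i)` and `|h_j|` is at most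
the `j`-th coefficient of `(1 - X)^{-d}`, so `|β_{m,k}| ≤ 2^d C(m+d,d) ≤ (2e(m+d)/d)^d`, the last
step by `C(n,d) ≤ n^d/d!` and `d^d/d! ≤ e^d`.
-/

open PowerSeries

theorem PowerSeries.norm_coeff_mul_le {R : Type*} [SeminormedRing R] {f g : R⟦X⟧} {F G : ℝ⟦X⟧}
    (hf : ∀ n, ‖coeff n f‖ ≤ coeff n F) (hg : ∀ n, ‖coeff n g‖ ≤ coeff n G) (n : ℕ) :
    ‖coeff n (f * g)‖ ≤ coeff n (F * G) := by
  rw [coeff_mul, coeff_mul]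
  refine (norm_sum_le _ _).trans (sum_le_sum fun p _ => (norm_mul_le _ _).trans ?_)
  exact mul_le_mul (hf _) (hg _) (norm_nonneg _) ((norm_nonneg _).trans (hf _))

theorem PowerSeries.norm_coeff_prod_le {R ι : Type*} [SeminormedCommRing R] [NormOneClass R]
    (s : Finset ι) {f : ι → R⟦X⟧} {F : ι → ℝ⟦X⟧}
    (h : ∀ i ∈ s, ∀ n, ‖coeff n (f i)‖ ≤ coeff n (F i)) (n : ℕ) :
    ‖coeff n (∏ i ∈ s, f i)‖ ≤ coeff n (∏ i ∈ s, F i) := by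
  classical
  induction s using Finset.induction_on generalizing n with
  | empty => simp only [prod_empty, coeff_one]; split_ifs <;> simp
  | insert i s hi ih =>
    rw [prod_insert hi, prod_insert hi]
    exact norm_coeff_mul_le (h i (mem_insert_self i s))
      (ih fun j hj => h j (mem_insert_of_mem hj)) n

theorem PowerSeries.coeff_mk_one_pow_le (d n : ℕ) :
    coeff n ((mk 1 : ℝ⟦X⟧) ^ d) ≤ (d + n).choose d := by
  cases d with
  | zero => simp only [pow_zero, coeff_one]; split_ifs <;> simp
  | succ d =>
    rw [mk_one_pow_eq_mk_choose_add, coeff_mk, add_right_comm, Nat.choose_succ_succ', Nat.cast_add]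
    exact le_add_of_nonneg_right (Nat.cast_nonneg _)

/-- `rescale a (mk 1) = ∑ aⁿ Xⁿ = 1 / (1 - a X)`, so `hsymm d lam n` is the complete homogeneous
symmetric polynomial `h_n(λ)`. -/
noncomputable def hsymmSeries (d : ℕ) (lam : Fin d → ℂ) : ℂ⟦X⟧ :=
  ∏ j, rescale (lam j) (mk 1)

noncomputable def hsymm (d : ℕ) (lam : Fin d → ℂ) (n : ℕ) : ℂ :=
  coeff n (hsymmSeries d lam)

section SymmetricFunctions

variable {d : ℕ} (lam : Fin d → ℂ)

theorem coeff_prod_one_sub_C_mul_X (n : ℕ) :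
    coeff n (∏ j, (1 - C (lam j) * X)) = (-1) ^ n * esymm d lam n := by
  have hterm (t : Finset (Fin d)) :
      ∏ j ∈ t, -(C (lam j) * X) = C (∏ j ∈ t, -lam j) * X ^ #t := by
    simp [prod_mul_distrib, prod_neg, mul_assoc]
  simp_rw [sub_eq_add_neg, prod_one_add, hterm, map_sum, coeff_C_mul_X_pow, esymm, mul_sum,
    powersetCard_eq_filter, sum_filter]
  refine sum_congr rfl fun t _ => ?_
  obtain rfl | hn := eq_or_ne n #t
  · simp [prod_neg]
  · simp [hn, hn.symm]

theorem esymm_zero : esymm d lam 0 = 1 := by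
  simp [esymm]

theorem prod_one_sub_C_mul_X_mul_hsymmSeries :
    (∏ j, (1 - C (lam j) * X)) * hsymmSeries d lam = 1 := by
  rw [hsymmSeries, ← prod_mul_distrib]
  refine prod_eq_one fun j _ => ?_
  rw [← rescale_X, ← map_one (rescale (lam j)), ← map_sub, ← map_mul, mul_comm,
    mk_one_mul_one_sub_eq_one, map_one]

theorem hsymm_zero : hsymm d lam 0 = 1 := by
  rw [hsymm, coeff_zero_eq_constantCoeff_apply, hsymmSeries, map_prod]
  exact prod_eq_one fun j _ => by simp [← coeff_zero_eq_constantCoeff_apply, coeff_rescale]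

theorem sum_antidiagonal_esymm_mul_hsymm_eq_zero {n : ℕ} (hn : n ≠ 0) :
    ∑ p ∈ antidiagonal n, (-1) ^ p.1 * esymm d lam p.1 * hsymm d lam p.2 = 0 := by
  have h := congr(coeff n $(prod_one_sub_C_mul_X_mul_hsymmSeries lam))
  rw [coeff_mul, coeff_one, if_neg hn] at h
  simpa only [coeff_prod_one_sub_C_mul_X, hsymm, mul_assoc] using h

theorem sum_antidiagonal_succ_esymm_mul_hsymm (k m : ℕ) :
    ∑ p ∈ antidiagonal (m + 1), (-1) ^ p.1 * esymm d lam (k + p.1) * hsymm d lam p.2 =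
      esymm d lam k * hsymm d lam (m + 1) -
        ∑ p ∈ antidiagonal m, (-1) ^ p.1 * esymm d lam (k + 1 + p.1) * hsymm d lam p.2 := by
  rw [Nat.sum_antidiagonal_succ, sub_eq_add_neg, ← sum_neg_distrib]
  simp only [pow_zero, one_mul, add_zero, pow_succ, add_assoc, add_comm 1]
  congr 1
  exact sum_congr rfl fun p _ => by ring

theorem hsymm_succ (m : ℕ) :
    hsymm d lam (m + 1) =
      ∑ p ∈ antidiagonal m, (-1) ^ p.1 * esymm d lam (1 + p.1) * hsymm d lam p.2 := by
  have h := sum_antidiagonal_succ_esymm_mul_hsymm lam 0 m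
  simp only [zero_add, esymm_zero, one_mul] at h
  rw [sum_antidiagonal_esymm_mul_hsymm_eq_zero lam m.succ_ne_zero] at h
  linear_combination -h

theorem betaC_eq_sum (m k : ℕ) :
    betaC d lam m k =
      ∑ p ∈ antidiagonal m, (-1) ^ p.1 * esymm d lam (k + p.1) * hsymm d lam p.2 := by
  induction m generalizing k with
  | zero => simp [betaC, hsymm_zero]
  | succ m ih =>
    rw [sum_antidiagonal_succ_esymm_mul_hsymm, hsymm_succ, betaC, ih, ih, mul_comm]

section Bounds

variable {lam}

theorem norm_esymm_le (hlam : ∀ j, ‖lam j‖ ≤ 1) (k : ℕ) : ‖esymm d lam k‖ ≤ d.choose k := by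
  calc ‖esymm d lam k‖ ≤ ∑ S ∈ powersetCard k (univ : Finset (Fin d)), (1 : ℝ) :=
        (norm_sum_le _ _).trans <| sum_le_sum fun S _ =>
          (Finset.norm_prod_le _ _).trans (prod_le_one (fun j _ => norm_nonneg _) fun j _ => hlam j)
    _ = d.choose k := by simp

theorem norm_hsymm_le (hlam : ∀ j, ‖lam j‖ ≤ 1) (n : ℕ) : ‖hsymm d lam n‖ ≤ (d + n).choose d := by
  have hgeom : ∀ j, ∀ i, ‖coeff i (rescale (lam j) (mk 1))‖ ≤ coeff i (mk 1 : ℝ⟦X⟧) := by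
    intro j i
    simpa [coeff_rescale] using pow_le_one₀ (norm_nonneg _) (hlam j)
  calc ‖hsymm d lam n‖ ≤ coeff n (∏ _j : Fin d, (mk 1 : ℝ⟦X⟧)) :=
        norm_coeff_prod_le univ (fun j _ => hgeom j) n
    _ ≤ (d + n).choose d := by
        simpa only [prod_const, card_univ, Fintype.card_fin] using coeff_mk_one_pow_le d n

theorem sum_choose_le_two_pow (d : ℕ) (s : Finset ℕ) : ∑ j ∈ s, d.choose j ≤ 2 ^ d := by
  calc ∑ j ∈ s, d.choose j = ∑ j ∈ s ∩ range (d + 1), d.choose j := by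
        refine (sum_subset inter_subset_left fun j hj hj' => Nat.choose_eq_zero_of_lt ?_).symm
        simp_all
    _ ≤ ∑ j ∈ range (d + 1), d.choose j := sum_le_sum_of_subset inter_subset_right
    _ = 2 ^ d := Nat.sum_range_choose d

theorem norm_betaC_le (hlam : ∀ j, ‖lam j‖ ≤ 1) (m k : ℕ) :
    ‖betaC d lam m k‖ ≤ 2 ^ d * (m + d).choose d := by
  have hsum : ∑ p ∈ antidiagonal m, d.choose (k + p.1) ≤ 2 ^ d := by
    rw [Nat.sum_antidiagonal_eq_sum_range_succ_mk]
    simpa [sum_Ico_eq_sum_range] using sum_choose_le_two_pow d (Ico k (k + (m + 1)))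
  rw [betaC_eq_sum]
  calc _ ≤ ∑ p ∈ antidiagonal m, (d.choose (k + p.1) : ℝ) * (m + d).choose d := by
        refine (norm_sum_le _ _).trans (sum_le_sum fun p hp => ?_)
        have hp2 : p.2 ≤ m := Finset.HasAntidiagonal.antidiagonal.snd_le hp
        rw [norm_mul, norm_mul, norm_pow, norm_neg, norm_one, one_pow, one_mul]
        gcongr
        · exact norm_esymm_le hlam _
        · refine (norm_hsymm_le hlam _).trans ?_
          exact_mod_cast Nat.choose_le_choose d (by omega)
    _ ≤ 2 ^ d * (m + d).choose d := by
        rw [← sum_mul]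
        gcongr
        exact_mod_cast hsum

end Bounds

end SymmetricFunctions

theorem choose_le_exp_one_mul_div_pow (n k : ℕ) :
    (n.choose k : ℝ) ≤ (Real.exp 1 * n / k) ^ k := by
  rcases k.eq_zero_or_pos with rfl | hk
  · simp
  have hk' : (0 : ℝ) < k := by exact_mod_cast hk
  calc (n.choose k : ℝ) ≤ n ^ k / k.factorial := Nat.choose_le_pow_div k n
    _ = (n / k) ^ k * (k ^ k / k.factorial) := by
        rw [← mul_div_assoc, ← mul_pow, div_mul_cancel₀ _ hk'.ne']
    _ ≤ (n / k) ^ k * Real.exp k := by gcongr; exact Real.pow_div_factorial_le_exp _ hk'.le k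
    _ = (Real.exp 1 * n / k) ^ k := by
        rw [← Real.exp_one_pow, mul_div_assoc, mul_pow, mul_comm]

theorem beta_bound_general (d m k : ℕ)
    (lam : Fin d → ℂ) (hlam : ∀ j, ‖lam j‖ ≤ 1) :
    ‖betaC d lam m k‖ ≤
      (8 * Real.exp 1 * (max (m + k) d : ℝ) / (d : ℝ)) ^ d := by
  have hmax : 2 * ((m : ℝ) + d) ≤ 8 * (max (m + k) d : ℝ) := by
    have hm := le_max_left ((m : ℝ) + k) d
    have hd := le_max_right ((m : ℝ) + k) d
    linarith [k.cast_nonneg (α := ℝ)]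
  calc ‖betaC d lam m k‖ ≤ 2 ^ d * (m + d).choose d := norm_betaC_le hlam m k
    _ ≤ 2 ^ d * (Real.exp 1 * (m + d : ℕ) / d) ^ d := by
        gcongr; exact choose_le_exp_one_mul_div_pow _ _
    _ = (Real.exp 1 * (2 * ((m : ℝ) + d)) / d) ^ d := by
        rw [← mul_pow]; push_cast; ring
    _ ≤ (Real.exp 1 * (8 * (max (m + k) d : ℝ)) / d) ^ d := by gcongr
    _ = (8 * Real.exp 1 * (max (m + k) d : ℝ) / (d : ℝ)) ^ d := by ring

/-- Lemma B.7: bound on the coefficients `β_{m,k}(λ)` when all `|λ_j| ≤ 1`. -/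
theorem beta_bound (d m k : ℕ) (hd : 1 ≤ d) (hk1 : 1 ≤ k) (hkd : k ≤ d)
    (lam : Fin d → ℂ) (hlam : ∀ j, ‖lam j‖ ≤ 1) :
    ‖betaC d lam m k‖ ≤
      (8 * Real.exp 1 * (max (m + k) d : ℝ) / (d : ℝ)) ^ d :=
  beta_bound_general d m k lam hlam
end

section
/- Let d ≥ 1, let A be a d×d real matrix whose characteristic polynomial factors over ℂ as ∏_{k=1}^{d} (X − λ_k) with λ ∈ ℂ^d satisfying |λ_1| = 1 and |λ_k| ≤ 1 for all k ∈ {1,…,d}. Then for any vectors u, v ∈ ℝ^d and any integer m ≥ d+1, |u^⊤ A^m v| ≤ 2^d · ∏_{k=2}^{d} ( Σ_{j=0}^{m−d} |λ_k|^j ) · max{ |u^⊤ A v|, …, |u^⊤ A^d v| }. -/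
open Polynomial Finset Matrix

/-!
Let `x n = uᵀ Aⁿ v` and let `S` be the shift of sequences. By Cayley–Hamilton,
`(S - λ₁) ∏_{k ≥ 2} (S - λ_k)` annihilates `x`, so `g = ∏_{k ≥ 2} (S - λ_k) x` satisfies
`g (n + 1) = λ₁ g n` and its modulus is nonincreasing; expanding the product, `|g 1|` is at most
`2^(d-1) max_{1 ≤ i ≤ d} |x i|`. The factors `S - λ_k` are then undone one at
a time: if `(S - μ) h` is bounded by a nondecreasing `P`, solving `h (n + 1) = μ h n + (S - μ) h n`
bounds `h (t + 1)` by `P t · ∑_{j ≤ t} |μ|^j`, the initial values again being controlled by the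
first values of `x`.
-/

variable {R : Type*} [CommRing R]

variable (R) in
def seqShift : Module.End R (ℕ → R) := LinearMap.funLeft R R Nat.succ

@[simp] lemma seqShift_apply (f : ℕ → R) (n : ℕ) : seqShift R f n = f (n + 1) := rfl

lemma seqShift_pow_apply (k : ℕ) (f : ℕ → R) (n : ℕ) : (seqShift R ^ k) f n = f (n + k) := by
  induction k generalizing f with
  | zero => rfl
  | succ k ih => rw [pow_succ, Module.End.mul_apply, ih, seqShift_apply, add_assoc]

@[simp] lemma aeval_seqShift_X_sub_C_apply (μ : R) (f : ℕ → R) (n : ℕ) :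
    aeval (seqShift R) (X - C μ) f n = f (n + 1) - μ * f n := by
  simp

lemma aeval_seqShift_apply_seqShift (p : R[X]) (f : ℕ → R) :
    aeval (seqShift R) p (seqShift R f) = seqShift R (aeval (seqShift R) p f) := by
  have h := congrArg (aeval (seqShift R)) (commute_X p).eq
  simp only [map_mul, aeval_X] at h
  exact LinearMap.congr_fun h.symm f

lemma aeval_seqShift_apply_pow {𝒜 : Type*} [Ring 𝒜] [Algebra R 𝒜] (ψ : 𝒜 →ₗ[R] R) (a : 𝒜)
    (p : R[X]) (n : ℕ) :
    aeval (seqShift R) p (fun k => ψ (a ^ k)) n = ψ (aeval a p * a ^ n) := by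
  simp only [aeval_eq_sum_range, LinearMap.sum_apply, Finset.sum_apply, LinearMap.smul_apply,
    Pi.smul_apply, seqShift_pow_apply, Finset.sum_mul, map_sum, smul_mul_assoc, map_smul, ← pow_add,
    add_comm n]

lemma aeval_seqShift_charpoly_map_dotProduct_mulVec_pow {S n : Type*} [CommRing S] [Fintype n]
    [DecidableEq n] (f : R →+* S) (M : Matrix n n R) (u v : n → R) :
    aeval (seqShift S) (M.charpoly.map f) (fun k => f (u ⬝ᵥ (M ^ k) *ᵥ v)) = 0 := by
  let ψ : Matrix n n S →ₗ[S] S :=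
    { toFun := fun N => (f ∘ u) ⬝ᵥ N *ᵥ (f ∘ v)
      map_add' := by simp [add_mulVec]
      map_smul' := by simp [smul_mulVec] }
  have hψ : (fun k => f (u ⬝ᵥ (M ^ k) *ᵥ v)) = fun k => ψ (M.map f ^ k) := by
    ext k
    simp [ψ, RingHom.map_dotProduct, Function.comp_def, RingHom.map_mulVec, ← Matrix.map_pow]
  ext k
  rw [hψ, aeval_seqShift_apply_pow, ← charpoly_map, aeval_self_charpoly, zero_mul, map_zero]
  rfl

variable {𝕜 : Type*} [NormedField 𝕜]

lemma norm_le_of_succ_eq_mul {g : ℕ → 𝕜} {μ : 𝕜} (hμ : ‖μ‖ ≤ 1) (hg : ∀ n, g (n + 1) = μ * g n)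
    {m n : ℕ} (hmn : m ≤ n) : ‖g n‖ ≤ ‖g m‖ :=
  antitone_nat_of_succ_le (f := fun n => ‖g n‖)
    (fun n => by rw [hg, norm_mul]; exact mul_le_of_le_one_left (norm_nonneg _) hμ) hmn

lemma norm_le_mul_geom_sum_of_succ_eq {f g : ℕ → 𝕜} {μ : 𝕜} {P : ℕ → ℝ} (hP : Monotone P)
    (hf : ∀ n, f (n + 1) = μ * f n + g n) (h0 : ‖f 0‖ ≤ P 0) (hg : ∀ n, ‖g n‖ ≤ P (n + 1))
    (t : ℕ) : ‖f t‖ ≤ P t * ∑ j ∈ range (t + 1), ‖μ‖ ^ j := by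
  induction t with
  | zero => simpa using h0
  | succ t ih =>
    calc ‖f (t + 1)‖ ≤ ‖μ‖ * ‖f t‖ + ‖g t‖ := by
          rw [hf, ← norm_mul]; exact norm_add_le _ _
      _ ≤ ‖μ‖ * (P (t + 1) * ∑ j ∈ range (t + 1), ‖μ‖ ^ j) + P (t + 1) := by
          gcongr
          · exact ih.trans (by gcongr; exact hP t.le_succ)
          · exact hg t
      _ = P (t + 1) * ∑ j ∈ range (t + 1 + 1), ‖μ‖ ^ j := by
          rw [geom_sum_succ (n := t + 1)]; ring

variable {ι : Type*} {lam : ι → 𝕜} {s : Finset ι}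

lemma norm_aeval_seqShift_prod_le (hlam : ∀ k ∈ s, ‖lam k‖ ≤ 1) {f : ℕ → 𝕜} {B : ℝ} {n : ℕ}
    (hf : ∀ i, n ≤ i → i ≤ n + #s → ‖f i‖ ≤ B) :
    ‖aeval (seqShift 𝕜) (∏ k ∈ s, (X - C (lam k))) f n‖ ≤ 2 ^ #s * B := by
  classical
  induction s using Finset.induction_on generalizing n with
  | empty => simpa using hf n le_rfl (by simp)
  | insert a s ha ih =>
    rw [prod_insert ha, map_mul, Module.End.mul_apply, aeval_seqShift_X_sub_C_apply,
      card_insert_of_notMem ha]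
    set g := aeval (seqShift 𝕜) (∏ k ∈ s, (X - C (lam k))) f
    have hlam' : ∀ k ∈ s, ‖lam k‖ ≤ 1 := fun k hk => hlam k (mem_insert_of_mem hk)
    have h1 : ‖g (n + 1)‖ ≤ 2 ^ #s * B :=
      ih hlam' fun i hi hi' => hf i (by omega) (by rw [card_insert_of_notMem ha]; omega)
    have h0 : ‖g n‖ ≤ 2 ^ #s * B :=
      ih hlam' fun i hi hi' => hf i hi (by rw [card_insert_of_notMem ha]; omega)
    calc ‖g (n + 1) - lam a * g n‖ ≤ ‖g (n + 1)‖ + ‖lam a‖ * ‖g n‖ := by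
          rw [← norm_mul]; exact norm_sub_le _ _
      _ ≤ 2 ^ #s * B + 1 * (2 ^ #s * B) := by
          gcongr
          exact hlam a (mem_insert_self a s)
      _ = 2 ^ (#s + 1) * B := by ring

lemma norm_le_mul_prod_geom_sum (hlam : ∀ k ∈ s, ‖lam k‖ ≤ 1) {f : ℕ → 𝕜} {B : ℝ}
    {P : ℕ → ℝ} (hP : Monotone P) (hf : ∀ i ≤ #s, ‖f i‖ ≤ B) (hBP : 2 ^ #s * B ≤ P 0)
    (hg : ∀ t, ‖aeval (seqShift 𝕜) (∏ k ∈ s, (X - C (lam k))) f t‖ ≤ P t) (t : ℕ) :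
    ‖f (#s + t)‖ ≤ P t * ∏ k ∈ s, ∑ j ∈ range (t + 1), ‖lam k‖ ^ j := by
  classical
  induction s using Finset.induction_on generalizing f P with
  | empty => simpa using hg t
  | insert a s ha ih =>
    rw [card_insert_of_notMem ha] at hf hBP
    simp only [prod_insert ha, map_mul, Module.End.mul_apply, aeval_seqShift_X_sub_C_apply] at hg
    set g := aeval (seqShift 𝕜) (∏ k ∈ s, (X - C (lam k))) f
    have hlam' : ∀ k ∈ s, ‖lam k‖ ≤ 1 := fun k hk => hlam k (mem_insert_of_mem hk)
    have hB : 0 ≤ B := (norm_nonneg _).trans (hf 0 (Nat.zero_le _))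
    have hP0 : ∀ t, 0 ≤ P t := fun t =>
      (mul_nonneg (by positivity) hB).trans (hBP.trans (hP t.zero_le))
    have hBP' : 2 ^ #s * B ≤ P 0 := hBP.trans' (by gcongr <;> norm_num)
    have hg1 : ‖g 1‖ ≤ P 0 :=
      (norm_aeval_seqShift_prod_le hlam' fun i _ _ => hf i (by omega)).trans hBP'
    have hgs : ∀ t, ‖g (t + 1)‖ ≤ P t * ∑ j ∈ range (t + 1), ‖lam a‖ ^ j :=
      norm_le_mul_geom_sum_of_succ_eq (f := fun t => g (t + 1))
        (g := fun t => g (t + 2) - lam a * g (t + 1)) hP (fun n => by ring) hg1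
        (fun n => hg (n + 1))
    have hS : Monotone fun t => ∑ j ∈ range (t + 1), ‖lam a‖ ^ j := fun t t' htt' =>
      sum_le_sum_of_subset_of_nonneg (range_subset_range.2 (by omega)) fun _ _ _ => by positivity
    have hshift := ih hlam' (f := seqShift 𝕜 f) (hP.mul hS hP0 fun _ => by positivity)
      (fun i hi => hf (i + 1) (by omega)) (by simpa using hBP')
      (fun t => by simpa [aeval_seqShift_apply_seqShift] using hgs t)
    rwa [prod_insert ha, ← mul_assoc, card_insert_of_notMem ha, add_right_comm]

lemma norm_le_of_aeval_seqShift_mul_prod_eq_zero {μ : 𝕜} (hμ : ‖μ‖ ≤ 1)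
    (hlam : ∀ k ∈ s, ‖lam k‖ ≤ 1) {f : ℕ → 𝕜} {B : ℝ}
    (hf : aeval (seqShift 𝕜) ((X - C μ) * ∏ k ∈ s, (X - C (lam k))) f = 0)
    (hB : ∀ i, 1 ≤ i → i ≤ #s + 1 → ‖f i‖ ≤ B) (t : ℕ) :
    ‖f (#s + t + 1)‖ ≤ 2 ^ #s * B * ∏ k ∈ s, ∑ j ∈ range (t + 1), ‖lam k‖ ^ j := by
  set g := aeval (seqShift 𝕜) (∏ k ∈ s, (X - C (lam k))) f
  have hg : ∀ n, g (n + 1) = μ * g n := fun n => by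
    have := congrFun hf n
    rwa [map_mul, Module.End.mul_apply, aeval_seqShift_X_sub_C_apply, Pi.zero_apply,
      sub_eq_zero] at this
  have hg1 : ∀ t, ‖g (t + 1)‖ ≤ 2 ^ #s * B := fun t =>
    (norm_le_of_succ_eq_mul hμ hg (by omega)).trans
      (norm_aeval_seqShift_prod_le hlam fun i hi hi' => hB i hi (by omega))
  exact norm_le_mul_prod_geom_sum hlam (f := seqShift 𝕜 f) monotone_const
    (fun i hi => hB (i + 1) (by omega) (by omega)) le_rfl
    (fun t => by rw [aeval_seqShift_apply_seqShift]; exact hg1 t) t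

lemma Fin.filter_one_le_eq_erase_zero {d : ℕ} (hd : 1 ≤ d) :
    univ.filter (fun k : Fin d => 1 ≤ (k : ℕ)) = univ.erase ⟨0, hd⟩ := by
  ext k
  simp [Fin.ext_iff, Nat.one_le_iff_ne_zero]

theorem adaptive_power_bound_general (d : ℕ) (hd : 1 ≤ d)
    (A : Matrix (Fin d) (Fin d) ℝ) (lam : Fin d → ℂ)
    (hchar : A.charpoly.map (algebraMap ℝ ℂ) = ∏ k : Fin d, (X - C (lam k)))
    (hlam : ∀ k, ‖lam k‖ ≤ 1)
    (u v : Fin d → ℝ) :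
    ∀ m : ℕ, d + 1 ≤ m →
      |u ⬝ᵥ (A ^ m).mulVec v| ≤
        2 ^ d *
          (∏ k ∈ Finset.univ.filter (fun k : Fin d => 1 ≤ (k : ℕ)),
            ∑ j ∈ Finset.range (m - d + 1), ‖lam k‖ ^ j) *
          (Finset.Icc 1 d).sup' (Finset.nonempty_Icc.mpr hd)
            (fun i => |u ⬝ᵥ (A ^ i).mulVec v|) := by
  intro m hm
  set B := (Icc 1 d).sup' (nonempty_Icc.mpr hd) fun i => |u ⬝ᵥ (A ^ i).mulVec v|
  set s := univ.filter fun k : Fin d => 1 ≤ (k : ℕ)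
  have hcard : #s = d - 1 := by simp [s, Fin.filter_one_le_eq_erase_zero hd]
  have hann := aeval_seqShift_charpoly_map_dotProduct_mulVec_pow (algebraMap ℝ ℂ) A u v
  rw [hchar, ← mul_prod_erase univ (fun k => X - C (lam k)) (mem_univ ⟨0, hd⟩),
    ← Fin.filter_one_le_eq_erase_zero hd] at hann
  have hB : ∀ i, 1 ≤ i → i ≤ #s + 1 → ‖algebraMap ℝ ℂ (u ⬝ᵥ (A ^ i) *ᵥ v)‖ ≤ B :=
    fun i h1 h2 => by
      simpa using le_sup' (fun i => |u ⬝ᵥ (A ^ i).mulVec v|) (mem_Icc.2 ⟨h1, by omega⟩)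
  have key :=
    norm_le_of_aeval_seqShift_mul_prod_eq_zero (hlam _) (fun k _ => hlam k) hann hB (m - d)
  rw [show #s + (m - d) + 1 = m by omega] at key
  calc |u ⬝ᵥ (A ^ m).mulVec v| ≤ 2 ^ #s * B * ∏ k ∈ s, ∑ j ∈ range (m - d + 1), ‖lam k‖ ^ j := by
        simpa using key
    _ ≤ 2 ^ d * B * ∏ k ∈ s, ∑ j ∈ range (m - d + 1), ‖lam k‖ ^ j := by
        have : 0 ≤ B := (norm_nonneg _).trans (hB 1 le_rfl (by omega))
        gcongr
        · norm_num
        · omega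
    _ = _ := by ring

/-- Lemma D.2: eigenspectrum-adaptive bound on bilinear forms of matrix powers. Here
`λ_1, …, λ_d` (with `|λ_1| = 1`, `|λ_k| ≤ 1`) are the complex eigenvalues of the real
matrix `A`, listed with multiplicity. -/
theorem adaptive_power_bound (d : ℕ) (hd : 1 ≤ d)
    (A : Matrix (Fin d) (Fin d) ℝ) (lam : Fin d → ℂ)
    (hchar : A.charpoly.map (algebraMap ℝ ℂ) = ∏ k : Fin d, (X - C (lam k)))
    (hlam1 : ‖lam ⟨0, hd⟩‖ = 1)
    (hlam : ∀ k, ‖lam k‖ ≤ 1)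
    (u v : Fin d → ℝ) :
    ∀ m : ℕ, d + 1 ≤ m →
      |u ⬝ᵥ (A ^ m).mulVec v| ≤
        2 ^ d *
          (∏ k ∈ Finset.univ.filter (fun k : Fin d => 1 ≤ (k : ℕ)),
            ∑ j ∈ Finset.range (m - d + 1), ‖lam k‖ ^ j) *
          (Finset.Icc 1 d).sup' (Finset.nonempty_Icc.mpr hd)
            (fun i => |u ⬝ᵥ (A ^ i).mulVec v|) :=
  adaptive_power_bound_general d hd A lam hchar hlam u v
end
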